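/- Let X be a Banach space, Y an M-summand in X with X = Y ⊕_∞ W, Z a closed subspace of Y, and B a nonempty closed bounded subset of X with projections B(1) ⊆ Y and B(2) ⊆ W. If sup_{w∈B(2)} ‖w‖ ≤ rad_Z(B(1)), then cent_Z(B) = cent_Z(B(1)), and more generally for each η > 0, cent_Z(B,η) = cent_Z(B(1),η). -/

import Mathlib

/-! For `z ∈ Y` and `y + w ∈ B` we have `‖z - (y + w)‖ = max ‖z - y‖ ‖w‖`, so the farthest
distance from `z` to `B` is the larger of `r(z, B(1))` and `sup_{w ∈ B(2)} ‖w‖`. On `Z` the second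
is at most `rad_Z(B(1)) ≤ r(z, B(1))`, so `B` and `B(1)` have the same farthest-distance function
on `Z`, hence the same restricted radius, centres and `η`-centres. -/

open Metric Set Bornology Pointwise

/-- The farthest distance `r(v,B) = sup_{b ∈ B} ‖v - b‖`. -/
noncomputable def farr {X : Type*} [NormedAddCommGroup X] (v : X) (B : Set X) : ℝ :=
  ⨆ b : B, ‖v - (b : X)‖

/-- The restricted Chebyshev radius `rad_V(B) = inf_{v ∈ V} r(v,B)`. -/
noncomputable def rad {X : Type*} [NormedAddCommGroup X] (V B : Set X) : ℝ :=
  ⨅ v : V, farr (v : X) B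

/-- The set of restricted Chebyshev centers of `B` in `V`. -/
noncomputable def cheb {X : Type*} [NormedAddCommGroup X] (V B : Set X) : Set X :=
  {v ∈ V | farr v B = rad V B}

section FarthestDistance

variable {X : Type*} [NormedAddCommGroup X]

lemma farr_nonneg (v : X) (B : Set X) : 0 ≤ farr v B :=
  Real.iSup_nonneg fun _ => norm_nonneg _

lemma farr_le {v : X} {B : Set X} {r : ℝ} (hr : 0 ≤ r) (h : ∀ b ∈ B, ‖v - b‖ ≤ r) :
    farr v B ≤ r :=
  Real.iSup_le (fun b => h b b.2) hr

lemma norm_le_iSup_norm {S : Set X} (hS : IsBounded S) {s : X} (hs : s ∈ S) :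
    ‖s‖ ≤ ⨆ t : S, ‖(t : X)‖ := by
  obtain ⟨R, hR⟩ := isBounded_iff_forall_norm_le.1 hS
  exact le_ciSup ⟨R, by rintro _ ⟨t, rfl⟩; exact hR t t.2⟩ (⟨s, hs⟩ : S)

lemma norm_sub_le_farr {B : Set X} (hB : IsBounded B) (v : X) {b : X} (hb : b ∈ B) :
    ‖v - b‖ ≤ farr v B := by
  obtain ⟨R, hR⟩ := isBounded_iff_forall_norm_le.1 hB
  refine le_ciSup (f := fun c : B => ‖v - c‖) ⟨‖v‖ + R, ?_⟩ ⟨b, hb⟩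
  rintro _ ⟨c, rfl⟩
  exact (norm_sub_le _ _).trans (add_le_add_right (hR c c.2) _)

lemma rad_le_farr {V : Set X} (B : Set X) {v : X} (hv : v ∈ V) : rad V B ≤ farr v B :=
  ciInf_le ⟨0, by rintro _ ⟨u, rfl⟩; exact farr_nonneg _ _⟩ (⟨v, hv⟩ : V)

lemma rad_congr {V B C : Set X} (h : ∀ v ∈ V, farr v B = farr v C) : rad V B = rad V C :=
  iInf_congr fun v => h v v.2

lemma cheb_congr {V B C : Set X} (h : ∀ v ∈ V, farr v B = farr v C) : cheb V B = cheb V C := by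
  ext v
  exact and_congr_right fun hv => by rw [h v hv, rad_congr h]

end FarthestDistance

section MSummand

variable {X 𝕜 : Type*} [NormedAddCommGroup X] [Ring 𝕜] [Module 𝕜 X] {Y W : Submodule 𝕜 X}

lemma norm_sub_add_eq_max (hnorm : ∀ y ∈ Y, ∀ w ∈ W, ‖y + w‖ = max ‖y‖ ‖w‖)
    {z y w : X} (hz : z ∈ Y) (hy : y ∈ Y) (hw : w ∈ W) :
    ‖z - (y + w)‖ = max ‖z - y‖ ‖w‖ := by
  rw [show z - (y + w) = (z - y) + -w by abel, hnorm _ (sub_mem hz hy) _ (neg_mem hw), norm_neg]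

lemma isBounded_fst (hnorm : ∀ y ∈ Y, ∀ w ∈ W, ‖y + w‖ = max ‖y‖ ‖w‖) {B : Set X}
    (hB : IsBounded B) : IsBounded {y | y ∈ Y ∧ ∃ w ∈ W, y + w ∈ B} := by
  obtain ⟨R, hR⟩ := isBounded_iff_forall_norm_le.1 hB
  refine isBounded_iff_forall_norm_le.2 ⟨R, ?_⟩
  rintro y ⟨hy, w, hw, hyw⟩
  exact (le_max_left _ _).trans ((hnorm y hy w hw).symm.le.trans (hR _ hyw))

lemma isBounded_snd (hnorm : ∀ y ∈ Y, ∀ w ∈ W, ‖y + w‖ = max ‖y‖ ‖w‖) {B : Set X}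
    (hB : IsBounded B) : IsBounded {w | w ∈ W ∧ ∃ y ∈ Y, y + w ∈ B} := by
  obtain ⟨R, hR⟩ := isBounded_iff_forall_norm_le.1 hB
  refine isBounded_iff_forall_norm_le.2 ⟨R, ?_⟩
  rintro w ⟨hw, y, hy, hyw⟩
  exact (le_max_right _ _).trans ((hnorm y hy w hw).symm.le.trans (hR _ hyw))

lemma farr_eq_farr_fst (hsum : ∀ x : X, ∃ y ∈ Y, ∃ w ∈ W, x = y + w)
    (hnorm : ∀ y ∈ Y, ∀ w ∈ W, ‖y + w‖ = max ‖y‖ ‖w‖) {B : Set X} (hB : IsBounded B)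
    {z : X} (hz : z ∈ Y)
    (hle : (⨆ w : {w | w ∈ W ∧ ∃ y ∈ Y, y + w ∈ B}, ‖(w : X)‖) ≤
      farr z {y | y ∈ Y ∧ ∃ w ∈ W, y + w ∈ B}) :
    farr z B = farr z {y | y ∈ Y ∧ ∃ w ∈ W, y + w ∈ B} := by
  apply le_antisymm
  · refine farr_le (farr_nonneg _ _) fun b hb => ?_
    obtain ⟨y, hy, w, hw, rfl⟩ := hsum b
    rw [norm_sub_add_eq_max hnorm hz hy hw]
    exact max_le (norm_sub_le_farr (isBounded_fst hnorm hB) z ⟨hy, w, hw, hb⟩)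
      ((norm_le_iSup_norm (isBounded_snd hnorm hB) ⟨hw, y, hy, hb⟩).trans hle)
  · refine farr_le (farr_nonneg _ _) ?_
    rintro y ⟨hy, w, hw, hyw⟩
    calc ‖z - y‖ ≤ max ‖z - y‖ ‖w‖ := le_max_left _ _
      _ = ‖z - (y + w)‖ := (norm_sub_add_eq_max hnorm hz hy hw).symm
      _ ≤ farr z B := norm_sub_le_farr hB z hyw

end MSummand

theorem stmt19_general {X : Type*} [NormedAddCommGroup X] [NormedSpace ℝ X]
    (Y W Z : Subspace ℝ X)
    (hsum : ∀ x : X, ∃ y ∈ Y, ∃ w ∈ W, x = y + w)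
    (hnorm : ∀ y ∈ Y, ∀ w ∈ W, ‖y + w‖ = max ‖y‖ ‖w‖)
    (hZY : Z ≤ Y)
    (B : Set X) (hBb : IsBounded B)
    (hle : (⨆ w : {w | w ∈ W ∧ ∃ y ∈ Y, y + w ∈ B}, ‖(w : X)‖) ≤
      rad (Z : Set X) {y | y ∈ Y ∧ ∃ w ∈ W, y + w ∈ B}) :
    cheb (Z : Set X) B = cheb (Z : Set X) {y | y ∈ Y ∧ ∃ w ∈ W, y + w ∈ B} ∧
      ∀ η > (0 : ℝ),
        {z ∈ (Z : Set X) | farr z B ≤ rad (Z : Set X) B + η} =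
          {z ∈ (Z : Set X) |
            farr z {y | y ∈ Y ∧ ∃ w ∈ W, y + w ∈ B} ≤
              rad (Z : Set X) {y | y ∈ Y ∧ ∃ w ∈ W, y + w ∈ B} + η} := by
  have hfarr : ∀ z ∈ (Z : Set X), farr z B = farr z {y | y ∈ Y ∧ ∃ w ∈ W, y + w ∈ B} :=
    fun z hz => farr_eq_farr_fst hsum hnorm hBb (hZY hz) (hle.trans (rad_le_farr _ hz))
  refine ⟨cheb_congr hfarr, fun η _ => ?_⟩
  ext z
  exact and_congr_right fun hz => by rw [hfarr z hz, rad_congr hfarr]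

theorem stmt19 {X : Type*} [NormedAddCommGroup X] [NormedSpace ℝ X] [CompleteSpace X]
    (Y W Z : Subspace ℝ X)
    (hYc : IsClosed (Y : Set X)) (hWc : IsClosed (W : Set X))
    (hsum : ∀ x : X, ∃ y ∈ Y, ∃ w ∈ W, x = y + w)
    (hnorm : ∀ y ∈ Y, ∀ w ∈ W, ‖y + w‖ = max ‖y‖ ‖w‖)
    (hZY : Z ≤ Y) (hZc : IsClosed (Z : Set X))
    (B : Set X) (hBne : B.Nonempty) (hBc : IsClosed B) (hBb : IsBounded B)
    (hle : (⨆ w : {w | w ∈ W ∧ ∃ y ∈ Y, y + w ∈ B}, ‖(w : X)‖) ≤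
      rad (Z : Set X) {y | y ∈ Y ∧ ∃ w ∈ W, y + w ∈ B}) :
    cheb (Z : Set X) B = cheb (Z : Set X) {y | y ∈ Y ∧ ∃ w ∈ W, y + w ∈ B} ∧
      ∀ η > (0 : ℝ),
        {z ∈ (Z : Set X) | farr z B ≤ rad (Z : Set X) B + η} =
          {z ∈ (Z : Set X) |
            farr z {y | y ∈ Y ∧ ∃ w ∈ W, y + w ∈ B} ≤
              rad (Z : Set X) {y | y ∈ Y ∧ ∃ w ∈ W, y + w ∈ B} + η} :=
  stmt19_general Y W Z hsum hnorm hZY B hBb hle
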